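/- Let B ∈ R^{n×r} be full column rank with polar decomposition B = UH, and let S ∈ R^{s×n} with SU full column rank. Writing b = UUᵀb + b₂ with b₂ = (I − UUᵀ)b, the least-squares solution ĉ of min_x ‖S(Bx − b)‖₂ satisfies Bĉ = UUᵀb + U(SU)^† S b₂. -/

import Mathlib

open Matrix
open scoped Matrix.Norms.L2Operator

/-- Euclidean norm of a vector in `Fin n → ℝ`. -/
noncomputable def enorm₂ {n : ℕ} (v : Fin n → ℝ) : ℝ :=
  ‖(WithLp.equiv 2 (Fin n → ℝ)).symm v‖

/-- Smallest singular value: infimum of `‖M x‖₂` over unit vectors `x`. -/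
noncomputable def sigmaMin {m r : ℕ} (M : Matrix (Fin m) (Fin r) ℝ) : ℝ :=
  sInf {t | ∃ x : Fin r → ℝ, enorm₂ x = 1 ∧ t = enorm₂ (M.mulVec x)}

/-- Largest singular value: supremum of `‖M x‖₂` over unit vectors `x`. -/
noncomputable def sigmaMax {m r : ℕ} (M : Matrix (Fin m) (Fin r) ℝ) : ℝ :=
  sSup {t | ∃ x : Fin r → ℝ, enorm₂ x = 1 ∧ t = enorm₂ (M.mulVec x)}

/-- Moore–Penrose pseudoinverse of a full-column-rank matrix. -/
noncomputable def pinv {m r : ℕ} (M : Matrix (Fin m) (Fin r) ℝ) :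
    Matrix (Fin r) (Fin m) ℝ :=
  (Mᵀ * M)⁻¹ * Mᵀ

/-- `S` is a row-subsampling matrix: a row-submatrix of the identity. -/
def IsSubsampling {s n : ℕ} (S : Matrix (Fin s) (Fin n) ℝ) : Prop :=
  ∃ f : Fin s → Fin n, Function.Injective f ∧ ∀ i j, S i j = if j = f i then 1 else 0

/-!
With `M = S * U`, the factor `H` cancels out of the sketched solution: `pinv (M * H) = H⁻¹ * pinv M`,
so `B ĉ = U (pinv M) S b`. Since `M` has full column rank, `pinv M * M = 1`, hence
`U (pinv M) S (U Uᵀ b) = U Uᵀ b`, and splitting `b = U Uᵀ b + b₂` gives the formula.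
-/

namespace Matrix

theorem isUnit_of_rank_eq_card {m K : Type*} [Fintype m] [DecidableEq m] [Field K]
    {A : Matrix m m K} (h : A.rank = Fintype.card m) : IsUnit A := by
  rw [← mulVec_surjective_iff_isUnit]
  have hrange : LinearMap.range A.mulVecLin = ⊤ :=
    Submodule.eq_top_of_finrank_eq (by rwa [Module.finrank_fintype_fun_eq_card])
  exact LinearMap.range_eq_top.mp hrange

end Matrix

section Pinv

variable {m r : ℕ}

theorem pinv_mul_of_isUnit (M : Matrix (Fin m) (Fin r) ℝ) {H : Matrix (Fin r) (Fin r) ℝ}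
    (hH : IsUnit H) : pinv (M * H) = H⁻¹ * pinv M := by
  have hHt : IsUnit Hᵀ.det := isUnit_det_transpose H ((isUnit_iff_isUnit_det H).mp hH)
  rw [pinv, pinv, transpose_mul, show Hᵀ * Mᵀ * (M * H) = Hᵀ * (Mᵀ * M) * H by
    simp only [Matrix.mul_assoc], Matrix.mul_inv_rev, Matrix.mul_inv_rev]
  simp only [Matrix.mul_assoc, nonsing_inv_mul_cancel_left _ _ hHt]

theorem pinv_mul_self_of_rank_eq {M : Matrix (Fin m) (Fin r) ℝ} (hM : M.rank = r) :
    pinv M * M = 1 := by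
  have hMtM : IsUnit (Mᵀ * M) :=
    isUnit_of_rank_eq_card (by rw [rank_transpose_mul_self, hM, Fintype.card_fin])
  rw [pinv, Matrix.mul_assoc, nonsing_inv_mul _ ((isUnit_iff_isUnit_det _).mp hMtM)]

end Pinv

theorem stmt6_general {n r s : ℕ}
    (B U : Matrix (Fin n) (Fin r) ℝ) (H : Matrix (Fin r) (Fin r) ℝ)
    (hB : B = U * H) (hH : H.PosDef)
    (S : Matrix (Fin s) (Fin n) ℝ) (hSU : (S * U).rank = r)
    (b : Fin n → ℝ) (chat : Fin r → ℝ)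
    (hchat : chat = (pinv (S * B)).mulVec (S.mulVec b)) :
    B.mulVec chat =
      U.mulVec (Uᵀ.mulVec b) +
        (U * pinv (S * U) * S).mulVec (b - U.mulVec (Uᵀ.mulVec b)) := by
  have hHunit : IsUnit H := hH.isUnit
  have hsketch : B * pinv (S * B) = U * pinv (S * U) := by
    rw [hB, ← Matrix.mul_assoc, pinv_mul_of_isUnit _ hHunit, Matrix.mul_assoc U,
      mul_nonsing_inv_cancel_left _ _ ((isUnit_iff_isUnit_det _).mp hHunit)]
  have hfix : U * pinv (S * U) * S * U = U := by
    rw [Matrix.mul_assoc _ S, Matrix.mul_assoc U, pinv_mul_self_of_rank_eq hSU, Matrix.mul_one]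
  rw [hchat, mulVec_mulVec, hsketch, mulVec_mulVec, mulVec_sub,
    mulVec_mulVec (M := U * pinv (S * U) * S) (N := U), hfix]
  abel

/-- formula for the subsampled least-squares approximation. -/
theorem stmt6 {n r s : ℕ} (hrs : r ≤ s) (hsn : s ≤ n)
    (B U : Matrix (Fin n) (Fin r) ℝ) (H : Matrix (Fin r) (Fin r) ℝ)
    (hB : B = U * H) (hU : Uᵀ * U = 1) (hH : H.PosDef)
    (hBrank : B.rank = r)
    (S : Matrix (Fin s) (Fin n) ℝ) (hSU : (S * U).rank = r)
    (b : Fin n → ℝ) (chat : Fin r → ℝ)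
    (hchat : chat = (pinv (S * B)).mulVec (S.mulVec b)) :
    B.mulVec chat =
      U.mulVec (Uᵀ.mulVec b) +
        (U * pinv (S * U) * S).mulVec (b - U.mulVec (Uᵀ.mulVec b)) :=
  stmt6_general B U H hB hH S hSU b chat hchat
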